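/- arXiv:2605.29467 — 3 statements merged into one kernel-verified Lean document; each statement's English description precedes it below -/
import Mathlib

section
/- Let α > 0 and β > 0, and let μ be the Gamma distribution on ℝ with shape α and rate β. Then the pushforward of μ under the logarithm map x ↦ log(x) (defined on (0,∞), which carries all of μ's mass) is absolutely continuous with respect to Lebesgue measure on ℝ, with density z ↦ (β^α / Γ(α)) · exp(α·z − β·exp(z)). This is the belief-propagation message through the exponential link factor in the backward direction: it is the log-gamma distribution with parameters (β⁻¹, α). -/
open MeasureTheory ProbabilityTheory Real Set

/-!
Since `log` is inverse to `exp : ℝ → (0, ∞)`, the change of variables `x = exp z` turns a density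
`f` carried by `(0, ∞)` into the density `exp z * f (exp z)` for the image under `log`. For the
Gamma density `x ^ (α - 1) * exp (-β x)` the Jacobian `exp z` raises `exp (z (α - 1))` to
`exp (α z)`.
-/

theorem Real.exp_image_eq_Ioi_inter_log_preimage (s : Set ℝ) :
    exp '' s = Ioi 0 ∩ log ⁻¹' s := by
  ext x
  constructor
  · rintro ⟨z, hz, rfl⟩
    exact ⟨exp_pos z, by rwa [mem_preimage, log_exp]⟩
  · rintro ⟨hx, hxs⟩
    exact ⟨log x, hxs, exp_log hx⟩

theorem Real.map_log_withDensity {f : ℝ → ENNReal} (hf : ∀ x < 0, f x = 0) :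
    (volume.withDensity f).map log =
      volume.withDensity fun z => ENNReal.ofReal (exp z) * f (exp z) := by
  -- `f 0` need not vanish, but `{0}` is null
  have hf_Ioi : f =ᵐ[volume] (Ioi 0).indicator f := by
    filter_upwards [Measure.ae_ne volume 0] with x hx
    rcases hx.lt_or_gt with hneg | hpos
    · rw [hf x hneg, indicator_of_notMem (s := Ioi 0) (not_lt.2 hneg.le)]
    · rw [indicator_of_mem (s := Ioi 0) hpos]
  ext s hs
  calc (volume.withDensity f).map log s = ∫⁻ x in log ⁻¹' s, f x := by
        rw [Measure.map_apply measurable_log hs, withDensity_apply _ (measurable_log hs)]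
    _ = ∫⁻ x in exp '' s, f x := by
        rw [lintegral_congr_ae (ae_restrict_of_ae hf_Ioi), lintegral_indicator measurableSet_Ioi,
          Measure.restrict_restrict measurableSet_Ioi, exp_image_eq_Ioi_inter_log_preimage]
    _ = ∫⁻ z in s, ENNReal.ofReal (exp z) * f (exp z) := by
        rw [lintegral_image_eq_lintegral_abs_deriv_mul hs
          (fun z _ => (hasDerivAt_exp z).hasDerivWithinAt) exp_injective.injOn]
        simp only [abs_of_pos (exp_pos _)]
    _ = _ := (withDensity_apply _ hs).symm

theorem ProbabilityTheory.exp_mul_gammaPDFReal_exp (a r z : ℝ) :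
    exp z * gammaPDFReal a r (exp z) = r ^ a / Gamma a * exp (a * z - r * exp z) := by
  have hpow : exp z ^ (a - 1) = exp (z * (a - 1)) := by
    rw [rpow_def_of_pos (exp_pos z), log_exp]
  rw [gammaPDFReal, if_pos (exp_pos z).le, hpow,
    show a * z - r * exp z = z + (z * (a - 1) + -(r * exp z)) by ring, exp_add, exp_add]
  ring

theorem log_pushforward_gamma_is_loggamma_general (α β : ℝ) :
    Measure.map Real.log (gammaMeasure α β) =
      volume.withDensity (fun z : ℝ => ENNReal.ofReal
        (β ^ α / Real.Gamma α * Real.exp (α * z - β * Real.exp z))) := by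
  rw [gammaMeasure, map_log_withDensity fun x hx => gammaPDF_of_neg hx]
  congr with z
  rw [gammaPDF, ← ENNReal.ofReal_mul (exp_pos z).le, exp_mul_gammaPDFReal_exp]

/-- The pushforward of the Gamma distribution with shape `α > 0` and rate `β > 0` under
`x ↦ log x` is absolutely continuous w.r.t. Lebesgue measure on `ℝ`, with density
`z ↦ (β^α / Γ(α)) · exp(α z − β e^z)` (the log-gamma distribution with parameters `(β⁻¹, α)`). -/
theorem log_pushforward_gamma_is_loggamma (α β : ℝ) (hα : 0 < α) (hβ : 0 < β) :
    Measure.map Real.log (gammaMeasure α β) =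
      volume.withDensity (fun z : ℝ => ENNReal.ofReal
        (β ^ α / Real.Gamma α * Real.exp (α * z - β * Real.exp z))) :=
  log_pushforward_gamma_is_loggamma_general α β
end

section
/- Let α > 0 and β > 0, and let X be a random variable with the Gamma distribution of shape α and rate β. Then E[(log X)²] = ψ′(α) + (ψ(α) − log β)², where ψ(α) = (d/dt log Γ(t))|_{t=α} is the digamma function and ψ′(α) = (d²/dt² log Γ(t))|_{t=α} is the trigamma function. Equivalently, Var(log X) = ψ′(α) and E[log X] = ψ(α) − log β. -/
/-! Put `M_k(t) = ∫₀^∞ x^(t-1) (log x)^k e^(-βx) dx`. Then `M_0(t) = β^(-t) Γ(t)`, and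
differentiating the Mellin transform under the integral sign gives `M_k' = M_(k+1)`.
The density of `Gamma(α, β)` is `x^(α-1) e^(-βx) / M_0(α)`, so `E[(log X)^k] = M_k(α) / M_0(α)`;
on the other hand `log Γ(t) = log M_0(t) + t log β`, whence `ψ = M_1 / M_0 + log β` and
`ψ' = M_2 / M_0 - (M_1 / M_0)^2`. -/

open Real MeasureTheory ProbabilityTheory
open Set Filter Asymptotics
open scoped Topology ENNReal

namespace GammaLogMoments

noncomputable def logPowExp (r : ℝ) (k : ℕ) (x : ℝ) : ℂ :=
  ((log x ^ k * exp (-(r * x)) : ℝ) : ℂ)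

noncomputable def logMoment (r : ℝ) (k : ℕ) (t : ℝ) : ℝ :=
  ∫ x in Ioi 0, x ^ (t - 1) * (log x ^ k * exp (-(r * x)))

lemma log_smul_logPowExp (r : ℝ) (k : ℕ) :
    (fun x => log x • logPowExp r k x) = logPowExp r (k + 1) := by
  funext x
  simp only [logPowExp, Complex.real_smul, pow_succ]
  push_cast; ring

lemma logPowExp_isBigO_atTop {r : ℝ} (hr : 0 < r) (k : ℕ) (a : ℝ) :
    logPowExp r k =O[atTop] (· ^ (-a)) := by
  induction k generalizing a with
  | zero =>
    rw [← isBigO_norm_left]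
    simp_rw [logPowExp, Complex.norm_real, pow_zero, one_mul, isBigO_norm_left]
    simpa only [neg_mul] using (isLittleO_exp_neg_mul_rpow_atTop hr (-a)).isBigO
  | succ k ih =>
    rw [← log_smul_logPowExp]
    exact isBigO_rpow_top_log_smul (lt_add_one a) (ih (a + 1))

lemma logPowExp_isBigO_nhdsGT_zero (r : ℝ) (k : ℕ) {b : ℝ} (hb : 0 < b) :
    logPowExp r k =O[𝓝[>] 0] (· ^ (-b)) := by
  induction k generalizing b with
  | zero =>
    have hbdd : logPowExp r 0 =O[𝓝[>] 0] (fun _ => (1 : ℝ)) := by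
      refine isBigO_const_of_tendsto (y := (1 : ℂ)) ?_ one_ne_zero
      have hc : Continuous (logPowExp r 0) := by unfold logPowExp; simp only [pow_zero]; fun_prop
      simpa [logPowExp] using (hc.tendsto 0).mono_left nhdsWithin_le_nhds
    refine hbdd.trans (IsBigO.of_bound 1 ?_)
    filter_upwards [Ioo_mem_nhdsGT one_pos] with x hx
    rw [norm_one, one_mul, norm_of_nonneg (rpow_nonneg hx.1.le _)]
    exact one_le_rpow_of_pos_of_le_one_of_nonpos hx.1 hx.2.le (neg_nonpos.2 hb.le)
  | succ k ih =>
    rw [← log_smul_logPowExp]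
    exact isBigO_rpow_zero_log_smul (half_lt_self hb) (ih (half_pos hb))

lemma continuousOn_logPowExp (r : ℝ) (k : ℕ) : ContinuousOn (logPowExp r k) (Ioi 0) := by
  have hlog : ContinuousOn log (Ioi 0) := continuousOn_log.mono fun x hx => ne_of_gt hx
  exact Complex.continuous_ofReal.comp_continuousOn
    ((hlog.pow k).mul (by fun_prop))

lemma cpow_smul_ofReal {x : ℝ} (hx : 0 < x) (t y : ℝ) :
    (x : ℂ) ^ ((t : ℂ) - 1) • (y : ℂ) = ((x ^ (t - 1) * y : ℝ) : ℂ) := by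
  rw [smul_eq_mul, Complex.ofReal_mul, Complex.ofReal_cpow hx.le]
  push_cast; rfl

lemma mellin_logPowExp (r : ℝ) (k : ℕ) (t : ℝ) :
    mellin (logPowExp r k) t = logMoment r k t := by
  rw [mellin, logMoment, ← integral_complex_ofReal]
  exact setIntegral_congr_fun measurableSet_Ioi fun x hx => cpow_smul_ofReal hx t _

lemma hasDerivAt_mellin_logPowExp {r : ℝ} (hr : 0 < r) (k : ℕ) {t : ℝ} (ht : 0 < t) :
    HasDerivAt (mellin (logPowExp r k)) (mellin (logPowExp r (k + 1)) t) t := by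
  rw [← log_smul_logPowExp]
  exact (mellin_hasDerivAt_of_isBigO_rpow (a := t + 1) (b := t / 2)
    ((continuousOn_logPowExp r k).locallyIntegrableOn measurableSet_Ioi)
    (logPowExp_isBigO_atTop hr k _) (by simp) (logPowExp_isBigO_nhdsGT_zero r k (half_pos ht))
    (by simpa using half_lt_self ht)).2

lemma hasDerivAt_logMoment {r : ℝ} (hr : 0 < r) (k : ℕ) {t : ℝ} (ht : 0 < t) :
    HasDerivAt (logMoment r k) (logMoment r (k + 1) t) t := by
  simpa only [mellin_logPowExp, Complex.ofReal_re] using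
    (hasDerivAt_mellin_logPowExp hr k ht).real_of_complex

lemma integrableOn_logMoment {r : ℝ} (hr : 0 < r) (k : ℕ) {t : ℝ} (ht : 0 < t) :
    IntegrableOn (fun x => x ^ (t - 1) * (log x ^ k * exp (-(r * x)))) (Ioi 0) := by
  have h : IntegrableOn (fun x : ℝ => (x : ℂ) ^ ((t : ℂ) - 1) • logPowExp r k x) (Ioi 0) :=
    mellinConvergent_of_isBigO_rpow (a := t + 1) (b := t / 2)
      ((continuousOn_logPowExp r k).locallyIntegrableOn measurableSet_Ioi)
      (logPowExp_isBigO_atTop hr k _) (by simp) (logPowExp_isBigO_nhdsGT_zero r k (half_pos ht))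
      (by simpa using half_lt_self ht)
  refine IntegrableOn.congr_fun h.re (fun x hx => ?_) measurableSet_Ioi
  simp only [logPowExp, cpow_smul_ofReal hx]
  exact Complex.ofReal_re _

lemma logMoment_zero {r : ℝ} (hr : 0 < r) {t : ℝ} (ht : 0 < t) :
    logMoment r 0 t = (1 / r) ^ t * Gamma t := by
  simpa [logMoment] using integral_rpow_mul_exp_neg_mul_Ioi ht hr

lemma logMoment_zero_pos {r : ℝ} (hr : 0 < r) {t : ℝ} (ht : 0 < t) : 0 < logMoment r 0 t := by
  have := Gamma_pos_of_pos ht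
  rw [logMoment_zero hr ht]
  positivity

lemma log_Gamma_eventuallyEq {r : ℝ} (hr : 0 < r) {t : ℝ} (ht : 0 < t) :
    (fun u => log (Gamma u)) =ᶠ[𝓝 t] fun u => log (logMoment r 0 u) + u * log r := by
  filter_upwards [Ioi_mem_nhds ht] with u hu
  rw [logMoment_zero hr hu, log_mul (by positivity) (Gamma_pos_of_pos hu).ne',
    log_rpow (by positivity), one_div, log_inv]
  ring

lemma hasDerivAt_log_Gamma {r : ℝ} (hr : 0 < r) {t : ℝ} (ht : 0 < t) :
    HasDerivAt (fun u => log (Gamma u)) (logMoment r 1 t / logMoment r 0 t + log r) t := by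
  refine HasDerivAt.congr_of_eventuallyEq ?_ (log_Gamma_eventuallyEq hr ht)
  simpa using ((hasDerivAt_logMoment hr 0 ht).log (logMoment_zero_pos hr ht).ne').fun_add
    ((hasDerivAt_id t).mul_const (log r))

lemma deriv_log_Gamma {r : ℝ} (hr : 0 < r) {t : ℝ} (ht : 0 < t) :
    deriv (fun u => log (Gamma u)) t = logMoment r 1 t / logMoment r 0 t + log r :=
  (hasDerivAt_log_Gamma hr ht).deriv

lemma deriv_deriv_log_Gamma {r : ℝ} (hr : 0 < r) {t : ℝ} (ht : 0 < t) :
    deriv (deriv fun u => log (Gamma u)) t =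
      logMoment r 2 t / logMoment r 0 t - (logMoment r 1 t / logMoment r 0 t) ^ 2 := by
  have hψ : deriv (fun u => log (Gamma u)) =ᶠ[𝓝 t]
      fun u => logMoment r 1 u / logMoment r 0 u + log r := by
    filter_upwards [Ioi_mem_nhds ht] with u hu using deriv_log_Gamma hr hu
  have hM₀ := (logMoment_zero_pos hr ht).ne'
  rw [hψ.deriv_eq, (((hasDerivAt_logMoment hr 1 ht).fun_div (hasDerivAt_logMoment hr 0 ht)
    hM₀).add_const (log r)).deriv]
  field_simp

section GammaMeasure

variable {α β : ℝ} (hα : 0 < α) (hβ : 0 < β)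
include hα hβ

lemma gammaPDFReal_smul_ae_eq (g : ℝ → ℝ) :
    (fun x => (gammaPDFReal α β x).toNNReal • g x) =ᵐ[volume]
      (Ioi 0).indicator fun x => β ^ α / Gamma α * (x ^ (α - 1) * (g x * exp (-(β * x)))) := by
  filter_upwards [Measure.ae_ne volume 0] with x hx
  rcases hx.lt_or_gt with hneg | hpos
  · simp [gammaPDFReal, hneg.not_ge, hneg.not_gt]
  · rw [NNReal.smul_def, coe_toNNReal _ (gammaPDFReal_nonneg hα hβ x), smul_eq_mul,
      indicator_of_mem (mem_Ioi.2 hpos), gammaPDFReal, if_pos hpos.le]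
    ring

lemma integral_gammaMeasure (g : ℝ → ℝ) :
    ∫ x, g x ∂gammaMeasure α β =
      β ^ α / Gamma α * ∫ x in Ioi 0, x ^ (α - 1) * (g x * exp (-(β * x))) := by
  -- `ENNReal.ofReal` is definitionally the coercion of `Real.toNNReal`
  change ∫ x, g x ∂volume.withDensity (fun x => ((gammaPDFReal α β x).toNNReal : ℝ≥0∞)) = _
  rw [integral_withDensity_eq_integral_smul (measurable_gammaPDFReal α β).real_toNNReal,
    integral_congr_ae (gammaPDFReal_smul_ae_eq hα hβ g), integral_indicator measurableSet_Ioi,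
    integral_const_mul]

lemma integrable_gammaMeasure {g : ℝ → ℝ}
    (hg : IntegrableOn (fun x => x ^ (α - 1) * (g x * exp (-(β * x)))) (Ioi 0)) :
    Integrable g (gammaMeasure α β) := by
  change Integrable g (volume.withDensity (fun x => ((gammaPDFReal α β x).toNNReal : ℝ≥0∞)))
  rw [integrable_withDensity_iff_integrable_smul (measurable_gammaPDFReal α β).real_toNNReal,
    integrable_congr (gammaPDFReal_smul_ae_eq hα hβ g), integrable_indicator_iff measurableSet_Ioi]
  exact hg.const_mul _

lemma integral_gammaMeasure_log_pow (k : ℕ) :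
    ∫ x, log x ^ k ∂gammaMeasure α β = logMoment β k α / logMoment β 0 α := by
  rw [integral_gammaMeasure hα hβ]
  change β ^ α / Gamma α * logMoment β k α = _
  rw [logMoment_zero hβ hα, div_rpow zero_le_one hβ.le, one_rpow]
  have := Gamma_pos_of_pos hα
  field_simp

lemma memLp_log_gammaMeasure : MemLp log 2 (gammaMeasure α β) :=
  (memLp_two_iff_integrable_sq measurable_log.aestronglyMeasurable).2
    (integrable_gammaMeasure hα hβ (integrableOn_logMoment hβ 2 hα))

end GammaMeasure

end GammaLogMoments

open GammaLogMoments

/-- For `X ~ Gamma(α, β)`: `E[log X] = ψ(α) − log β`, `Var(log X) = ψ′(α)`, and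
`E[(log X)²] = ψ′(α) + (ψ(α) − log β)²`, where `ψ = (log Γ)′` is the digamma function and
`ψ′ = (log Γ)″` the trigamma function. -/
theorem gamma_log_moments (α β : ℝ) (hα : 0 < α) (hβ : 0 < β) :
    (∫ x, Real.log x ∂(gammaMeasure α β)) =
        deriv (fun t => Real.log (Real.Gamma t)) α - Real.log β ∧
    variance (fun x => Real.log x) (gammaMeasure α β) =
        deriv (deriv (fun t => Real.log (Real.Gamma t))) α ∧
    (∫ x, (Real.log x) ^ 2 ∂(gammaMeasure α β)) =
        deriv (deriv (fun t => Real.log (Real.Gamma t))) α +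
          (deriv (fun t => Real.log (Real.Gamma t)) α - Real.log β) ^ 2 := by
  have := isProbabilityMeasure_gammaMeasure hα hβ
  have hmean : ∫ x, log x ∂gammaMeasure α β = logMoment β 1 α / logMoment β 0 α := by
    simpa using integral_gammaMeasure_log_pow hα hβ 1
  have hvar : variance log (gammaMeasure α β) =
      ∫ x, log x ^ 2 ∂gammaMeasure α β - (∫ x, log x ∂gammaMeasure α β) ^ 2 :=
    variance_eq_sub (memLp_log_gammaMeasure hα hβ)
  rw [hvar, hmean, integral_gammaMeasure_log_pow hα hβ 2, deriv_log_Gamma hβ hα,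
    deriv_deriv_log_Gamma hβ hα]
  exact ⟨by ring, by ring, by ring⟩
end

section
/- Define a real-valued binary decision tree over ℝᵖ inductively: a leaf carries a constant c ∈ ℝ; an internal node carries a split direction v ∈ ℝᵖ, a threshold t ∈ ℝ, and two subtrees. Its hard evaluation at x is: at a leaf, c; at an internal node, the hard evaluation of the first subtree if ⟨v, x⟩ > t and of the second subtree if ⟨v, x⟩ < t. Its soft evaluation at temperature τ > 0 is: at a leaf, c; at an internal node with subtree soft-values L_τ(x), R_τ(x) and score s(x) = ⟨v,x⟩ − t, the blend (e^{τ·s(x)}·L_τ(x) + e^{−τ·s(x)}·R_τ(x))/(e^{τ·s(x)} + e^{−τ·s(x)}). Then for every tree T and every x ∈ ℝᵖ such that ⟨v, x⟩ ≠ t at every internal node of T, the soft evaluation of T at x converges to the hard evaluation of T at x as τ → ∞. -/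
open Filter Topology Matrix

/-- A real-valued binary decision tree over `ℝᵖ`: a leaf carries a constant, an internal
node carries a split direction `v`, a threshold `t`, and two subtrees. -/
inductive DTree (p : ℕ) where
  | leaf (c : ℝ)
  | node (v : Fin p → ℝ) (t : ℝ) (l r : DTree p)

namespace DTree

/-- Hard evaluation: at an internal node take the first subtree if `⟨v, x⟩ > t`,
otherwise the second (the two agree with the informal definition off the boundary). -/
noncomputable def hardEval {p : ℕ} : DTree p → (Fin p → ℝ) → ℝ
  | leaf c, _ => c
  | node v t l r, x => if t < v ⬝ᵥ x then hardEval l x else hardEval r x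

/-- Soft evaluation at temperature `τ`: at an internal node with score `s(x) = ⟨v,x⟩ − t`,
blend the subtree values with weights `e^{τ s(x)}` and `e^{−τ s(x)}`. -/
noncomputable def softEval {p : ℕ} : DTree p → ℝ → (Fin p → ℝ) → ℝ
  | leaf c, _, _ => c
  | node v t l r, τ, x =>
      (Real.exp (τ * (v ⬝ᵥ x - t)) * softEval l τ x +
        Real.exp (-(τ * (v ⬝ᵥ x - t))) * softEval r τ x) /
      (Real.exp (τ * (v ⬝ᵥ x - t)) + Real.exp (-(τ * (v ⬝ᵥ x - t))))

/-- `x` lies off the split boundary of every internal node of the tree. -/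
def OffBoundary {p : ℕ} : DTree p → (Fin p → ℝ) → Prop
  | leaf _, _ => True
  | node v t l r, x => v ⬝ᵥ x ≠ t ∧ OffBoundary l x ∧ OffBoundary r x

end DTree

/-! The exponential switch is the logistic sigmoid in disguise:
`(eᵃ L + e⁻ᵃ R) / (eᵃ + e⁻ᵃ) = σ(2a) L + (1 - σ(2a)) R`. For a score `s ≠ 0`, `σ(τ s)` tends to
`1` or `0` as `τ → ∞` according to the sign of `s`, so each node's blend converges to the branch
the hard tree selects, and induction on the tree concludes. -/

open Real

lemma exp_blend_eq_sigmoid (a L R : ℝ) :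
    (exp a * L + exp (-a) * R) / (exp a + exp (-a)) =
      sigmoid (2 * a) * L + (1 - sigmoid (2 * a)) * R := by
  rw [← sigmoid_neg, sigmoid_def, sigmoid_def, neg_neg]
  have h2a : exp (2 * a) = exp a / exp (-a) := by rw [← exp_sub]; ring_nf
  have h2a' : exp (-(2 * a)) = exp (-a) / exp a := by rw [← exp_sub]; ring_nf
  rw [h2a, h2a']
  field_simp
  ring

lemma tendsto_sigmoid_mul_atTop_of_pos {s : ℝ} (hs : 0 < s) :
    Tendsto (fun τ => sigmoid (τ * s)) atTop (𝓝 1) :=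
  tendsto_sigmoid_atTop.comp (tendsto_id.atTop_mul_const hs)

lemma tendsto_sigmoid_mul_atTop_of_neg {s : ℝ} (hs : s < 0) :
    Tendsto (fun τ => sigmoid (τ * s)) atTop (𝓝 0) :=
  tendsto_sigmoid_atBot.comp (tendsto_id.atTop_mul_const_of_neg hs)

lemma tendsto_exp_blend {f g : ℝ → ℝ} {a b s : ℝ} (hs : s ≠ 0)
    (hf : Tendsto f atTop (𝓝 a)) (hg : Tendsto g atTop (𝓝 b)) :
    Tendsto (fun τ => (exp (τ * s) * f τ + exp (-(τ * s)) * g τ) /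
        (exp (τ * s) + exp (-(τ * s)))) atTop (𝓝 (if 0 < s then a else b)) := by
  have hblend : ∀ {w : ℝ}, Tendsto (fun τ => sigmoid (τ * (2 * s))) atTop (𝓝 w) →
      Tendsto (fun τ => (exp (τ * s) * f τ + exp (-(τ * s)) * g τ) /
        (exp (τ * s) + exp (-(τ * s)))) atTop (𝓝 (w * a + (1 - w) * b)) := fun hw => by
    refine ((hw.mul hf).add ((tendsto_const_nhds.sub hw).mul hg)).congr fun τ => ?_
    rw [exp_blend_eq_sigmoid, mul_left_comm]
  rcases hs.lt_or_gt with hneg | hpos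
  · simpa [hneg.not_gt] using hblend (tendsto_sigmoid_mul_atTop_of_neg (by linarith))
  · simpa [hpos] using hblend (tendsto_sigmoid_mul_atTop_of_pos (by linarith))

/-- Decision-tree encoding in the sharp-routing limit: for every binary decision tree `T`
and every input `x` off all split boundaries of `T`, the soft evaluation of `T` at `x`
converges to the hard evaluation of `T` at `x` as `τ → ∞`. -/
theorem softEval_tendsto_hardEval {p : ℕ} (T : DTree p) (x : Fin p → ℝ)
    (hx : DTree.OffBoundary T x) :
    Tendsto (fun τ : ℝ => DTree.softEval T τ x) atTop (𝓝 (DTree.hardEval T x)) := by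
  induction T with
  | leaf c => exact tendsto_const_nhds
  | node v t l r ihl ihr =>
    obtain ⟨hne, hl, hr⟩ := hx
    simpa only [DTree.softEval, DTree.hardEval, sub_pos] using
      tendsto_exp_blend (sub_ne_zero.mpr hne) (ihl hl) (ihr hr)
end
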